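/- The special case k = 1 of the previous structural lemma: if f = A·∏_{i=1}^{s}(z−a_i)^{m_i}/∏_{j=1}^{t}(z−b_j)^{l_j} with m_i ≥ 1, l_j ≥ 1 and all a_i, b_j distinct, then f' = A·∏_i(z−a_i)^{m_i−1}·g(z)/∏_j(z−b_j)^{l_j+1}, where g is a polynomial with deg(g) ≤ s+t−1 and leading coefficient of z^{s+t−1} equal to M−N, where M = Σ m_i, N = Σ l_j. -/

import Mathlib

/-!
Write `f = A P / Q` with `P = ∏ (X - aᵢ)^{mᵢ}` and `Q = ∏ (X - b_j)^{l_j}`. The product rule gives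
`P' = ∏ (X - aᵢ)^{mᵢ-1} · Σ mᵢ ∏_{k ≠ i} (X - a_k)`, and similarly for `Q'`, so the quotient rule
`f' = A (P'Q - PQ') / Q²` leaves, after cancelling `∏ (X - b_j)^{l_j-1}`, the polynomial
`g = (Σ mᵢ ∏_{k ≠ i} (X - a_k)) ∏ (X - b_j) - ∏ (X - aᵢ) (Σ l_j ∏_{k ≠ j} (X - b_k))`.
Both products have degree at most `s + t - 1`, with monic factors, so the coefficient of
`X^{s+t-1}` in `g` is `Σ mᵢ - Σ l_j`.
-/

open Polynomial Finset Lagrange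

section PartialFraction

variable {R ι κ : Type*} [CommRing R]

theorem prod_X_sub_C_pow_eq_mul_nodal (s : Finset ι) (c : ι → R) (e : ι → ℕ)
    (he : ∀ i, 1 ≤ e i) :
    ∏ i ∈ s, (X - C (c i)) ^ e i = (∏ i ∈ s, (X - C (c i)) ^ (e i - 1)) * nodal s c := by
  rw [nodal, ← prod_mul_distrib]
  exact prod_congr rfl fun i _ => by rw [← pow_succ, Nat.sub_add_cancel (he i)]

variable [Fintype ι] [DecidableEq ι] [Fintype κ]

/-- The numerator of `Σ i, w i / (X - c i)` over the common denominator `nodal univ c`. -/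
noncomputable def partialFractionNumerator (c w : ι → R) : R[X] :=
  ∑ i, C (w i) * nodal (univ.erase i) c

theorem natDegree_partialFractionNumerator_le [Nontrivial R] (c w : ι → R) :
    (partialFractionNumerator c w).natDegree ≤ Fintype.card ι - 1 :=
  natDegree_sum_le_of_forall_le _ _ fun i _ =>
    (natDegree_C_mul_le _ _).trans (by simp [card_erase_of_mem])

theorem coeff_partialFractionNumerator [Nontrivial R] (c w : ι → R) :
    (partialFractionNumerator c w).coeff (Fintype.card ι - 1) = ∑ i, w i := by
  rw [partialFractionNumerator, finsetSum_coeff]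
  refine sum_congr rfl fun i _ => ?_
  have hdeg : (nodal (univ.erase i) c).natDegree = Fintype.card ι - 1 := by
    simp [card_erase_of_mem]
  rw [coeff_C_mul, ← hdeg, nodal_monic.coeff_natDegree, mul_one]

theorem natDegree_partialFractionNumerator_mul_nodal_le [Nontrivial R] (c w : ι → R)
    (d : κ → R) :
    (partialFractionNumerator c w * nodal univ d).natDegree
      ≤ Fintype.card ι + Fintype.card κ - 1 := by
  rcases isEmpty_or_nonempty ι with hι | hι
  · simp [partialFractionNumerator]
  · have := Fintype.card_pos (α := ι)
    calc _ ≤ (Fintype.card ι - 1) + Fintype.card κ :=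
          natDegree_mul_le_of_le (natDegree_partialFractionNumerator_le c w) (by simp)
      _ = _ := by omega

theorem coeff_partialFractionNumerator_mul_nodal [Nontrivial R] (c w : ι → R) (d : κ → R) :
    (partialFractionNumerator c w * nodal univ d).coeff (Fintype.card ι + Fintype.card κ - 1)
      = ∑ i, w i := by
  rcases isEmpty_or_nonempty ι with hι | hι
  · simp [partialFractionNumerator]
  · have := Fintype.card_pos (α := ι)
    rw [show Fintype.card ι + Fintype.card κ - 1 = (Fintype.card ι - 1) + (nodal univ d).natDegree
        by simp; omega,
      coeff_mul_add_eq_of_natDegree_le (natDegree_partialFractionNumerator_le c w) le_rfl,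
      coeff_partialFractionNumerator, nodal_monic.coeff_natDegree, mul_one]

theorem derivative_prod_X_sub_C_pow (c : ι → R) (e : ι → ℕ) (he : ∀ i, 1 ≤ e i) :
    derivative (∏ i, (X - C (c i)) ^ e i)
      = (∏ i, (X - C (c i)) ^ (e i - 1)) * partialFractionNumerator c (fun i => (e i : R)) := by
  rw [derivative_prod_finset, partialFractionNumerator, mul_sum]
  refine sum_congr rfl fun i _ => ?_
  rw [derivative_X_sub_C_pow, prod_X_sub_C_pow_eq_mul_nodal _ c e he,
    ← mul_prod_erase univ (fun j => (X - C (c j)) ^ (e j - 1)) (mem_univ i)]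
  ring

variable [DecidableEq κ]

/-- `f' / f = logDerivNumerator a m b l / (nodal univ a * nodal univ b)` for
`f = ∏ (X - a i) ^ m i / ∏ (X - b j) ^ l j`. -/
noncomputable def logDerivNumerator (a : ι → R) (m : ι → ℕ) (b : κ → R) (l : κ → ℕ) : R[X] :=
  partialFractionNumerator a (fun i => (m i : R)) * nodal univ b
    - nodal univ a * partialFractionNumerator b (fun j => (l j : R))

theorem natDegree_logDerivNumerator_le [Nontrivial R] (a : ι → R) (m : ι → ℕ)
    (b : κ → R) (l : κ → ℕ) :
    (logDerivNumerator a m b l).natDegree ≤ Fintype.card ι + Fintype.card κ - 1 := by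
  refine (natDegree_sub_le _ _).trans (max_le ?_ ?_)
  · exact natDegree_partialFractionNumerator_mul_nodal_le _ _ _
  · rw [mul_comm, add_comm]
    exact natDegree_partialFractionNumerator_mul_nodal_le _ _ _

theorem coeff_logDerivNumerator [Nontrivial R] (a : ι → R) (m : ι → ℕ)
    (b : κ → R) (l : κ → ℕ) :
    (logDerivNumerator a m b l).coeff (Fintype.card ι + Fintype.card κ - 1)
      = ∑ i, (m i : R) - ∑ j, (l j : R) := by
  rw [logDerivNumerator, coeff_sub, coeff_partialFractionNumerator_mul_nodal, mul_comm,
    add_comm, coeff_partialFractionNumerator_mul_nodal]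

theorem derivative_mul_sub_mul_derivative_prod_X_sub_C_pow (a : ι → R)
    (m : ι → ℕ) (hm : ∀ i, 1 ≤ m i) (b : κ → R) (l : κ → ℕ) (hl : ∀ j, 1 ≤ l j) :
    (derivative (∏ i, (X - C (a i)) ^ m i) * ∏ j, (X - C (b j)) ^ l j
        - (∏ i, (X - C (a i)) ^ m i) * derivative (∏ j, (X - C (b j)) ^ l j))
      * ∏ j, (X - C (b j)) ^ (l j + 1)
      = (∏ i, (X - C (a i)) ^ (m i - 1)) * logDerivNumerator a m b l
        * (∏ j, (X - C (b j)) ^ l j) ^ 2 := by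
  have hsucc : ∏ j, (X - C (b j)) ^ (l j + 1) = (∏ j, (X - C (b j)) ^ l j) * nodal univ b := by
    simp only [pow_succ, prod_mul_distrib, nodal]
  rw [derivative_prod_X_sub_C_pow a m hm, derivative_prod_X_sub_C_pow b l hl, hsucc,
    prod_X_sub_C_pow_eq_mul_nodal univ a m hm, prod_X_sub_C_pow_eq_mul_nodal univ b l hl,
    logDerivNumerator]
  ring

end PartialFraction

theorem hasDerivAt_mul_prod_div_prod {𝕜 ι κ : Type*} [NontriviallyNormedField 𝕜] [Fintype ι]
    [DecidableEq ι] [Fintype κ] [DecidableEq κ] (A : 𝕜) (a : ι → 𝕜) (m : ι → ℕ)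
    (hm : ∀ i, 1 ≤ m i) (b : κ → 𝕜) (l : κ → ℕ) (hl : ∀ j, 1 ≤ l j) {z : 𝕜}
    (hz : ∀ j, z ≠ b j) :
    HasDerivAt (fun w => A * (∏ i, (w - a i) ^ m i) / ∏ j, (w - b j) ^ l j)
      (A * (∏ i, (z - a i) ^ (m i - 1)) * (logDerivNumerator a m b l).eval z
        / ∏ j, (z - b j) ^ (l j + 1)) z := by
  set P : 𝕜[X] := ∏ i, (X - C (a i)) ^ m i
  set Q : 𝕜[X] := ∏ j, (X - C (b j)) ^ l j
  have hQz : Q.eval z ≠ 0 := by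
    simp only [Q, eval_prod, eval_pow, eval_sub, eval_X, eval_C]
    exact prod_ne_zero_iff.mpr fun j _ => pow_ne_zero _ (sub_ne_zero.mpr (hz j))
  have hDz : ∏ j, (z - b j) ^ (l j + 1) ≠ 0 :=
    prod_ne_zero_iff.mpr fun j _ => pow_ne_zero _ (sub_ne_zero.mpr (hz j))
  have hnum := congrArg (eval z)
    (derivative_mul_sub_mul_derivative_prod_X_sub_C_pow a m hm b l hl)
  have hPQ : (fun w => A * (∏ i, (w - a i) ^ m i) / ∏ j, (w - b j) ^ l j)
      = fun w => A * P.eval w / Q.eval w := by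
    simp only [P, Q, eval_prod, eval_pow, eval_sub, eval_X, eval_C]
  rw [hPQ]
  refine (((P.hasDerivAt z).const_mul A).div (Q.hasDerivAt z) hQz).congr_deriv ?_
  simp only [P, Q, eval_mul, eval_sub, eval_pow, eval_prod, eval_X, eval_C] at hnum hQz ⊢
  rw [div_eq_div_iff (pow_ne_zero 2 hQz) hDz]
  linear_combination A * hnum

theorem stmt6_general (s t : ℕ)
    (A : ℂ) (a : Fin s → ℂ) (b : Fin t → ℂ)
    (m : Fin s → ℕ) (hm : ∀ i, 1 ≤ m i) (l : Fin t → ℕ) (hl : ∀ j, 1 ≤ l j)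
    (f : ℂ → ℂ)
    (hf : ∀ z : ℂ, f z = A * (∏ i, (z - a i) ^ (m i)) / ∏ j, (z - b j) ^ (l j))
    (M N : ℕ) (hM : M = ∑ i, m i) (hN : N = ∑ j, l j) :
    ∃ g : ℂ[X], g.natDegree ≤ s + t - 1 ∧
      g.coeff (s + t - 1) = (M : ℂ) - (N : ℂ) ∧
      ∀ z : ℂ, (∀ j, z ≠ b j) →
        deriv f z
          = A * (∏ i, (z - a i) ^ (m i - 1)) * g.eval z / ∏ j, (z - b j) ^ (l j + 1) := by
  refine ⟨logDerivNumerator a m b l, ?_, ?_, fun z hz => ?_⟩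
  · simpa using natDegree_logDerivNumerator_le a m b l
  · simpa [hM, hN] using coeff_logDerivNumerator a m b l
  · rw [funext hf]
    exact (hasDerivAt_mul_prod_div_prod A a m hm b l hl hz).deriv

theorem stmt6 (s t : ℕ) (hs : 1 ≤ s) (ht : 1 ≤ t)
    (A : ℂ) (hA : A ≠ 0) (a : Fin s → ℂ) (b : Fin t → ℂ)
    (ha : Function.Injective a) (hb : Function.Injective b)
    (hab : ∀ i j, a i ≠ b j)
    (m : Fin s → ℕ) (hm : ∀ i, 1 ≤ m i) (l : Fin t → ℕ) (hl : ∀ j, 1 ≤ l j)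
    (f : ℂ → ℂ)
    (hf : ∀ z : ℂ, f z = A * (∏ i, (z - a i) ^ (m i)) / ∏ j, (z - b j) ^ (l j))
    (M N : ℕ) (hM : M = ∑ i, m i) (hN : N = ∑ j, l j) :
    ∃ g : ℂ[X], g.natDegree ≤ s + t - 1 ∧
      g.coeff (s + t - 1) = (M : ℂ) - (N : ℂ) ∧
      ∀ z : ℂ, (∀ j, z ≠ b j) →
        deriv f z
          = A * (∏ i, (z - a i) ^ (m i - 1)) * g.eval z / ∏ j, (z - b j) ^ (l j + 1) :=
  stmt6_general s t A a b m hm l hl f hf M N hM hN
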